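/- arXiv:0711.0896 — 2 statements merged into one kernel-verified Lean document; each statement's English description precedes it below -/
import Mathlib

section
/- Let R be a complete discrete valuation ring with uniformizer π whose residue field is algebraically closed of characteristic p ≥ 0. Let n', a', b' be positive integers with n' not divisible by p and gcd(a', b', n') = 1. Set e = gcd(n', a'), c = gcd(n', b'), n'' = n'/(e·c), a'' = a'/e, b'' = b'/c. Let Ψ : R[[u,v]] → R[[s,t]] be the R-algebra homomorphism determined by u ↦ s^{c} and v ↦ t^{e}. Then Ψ induces an injective ring homomorphism from A = R[[u,v]]/(π^{n'} − u^{a'}·v^{b'}) to B = R[[s,t]]/(π^{n''} − s^{a''}·t^{b''}), B is a finite A-module generated by the monomials s^{i}t^{j} with 0 ≤ i < c and 0 ≤ j < e, and the induced map of fraction fields Frac(A) → Frac(B) is an isomorphism. -/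
/-!
Put `x = π^{n''}` and `y = s^{a''} t^{b''}`. As `n' = n''ec`, `a' = a''e` and `b' = b''c`, the
substitution `Ψ` sends `π^{n'} − u^{a'} v^{b'}` to `x^{ec} − y^{ec}`, a multiple of `x − y`, so it
descends to `A → B`. Sorting the exponents of a series by their residues modulo `(c, e)` writes it
as `∑ s^i t^j Ψ(g_{ij})` over `i < c`, `j < e`, so these monomials generate `B` over `A`.

For injectivity, let `Ψ f = (x − y) h`. Multiplying by `∑ x^i y^{ec−1−i}` gives
`Ψ f · ∑ x^i y^{ec−1−i} = Ψ(π^{n'} − u^{a'} v^{b'}) · h`. Now keep only the monomials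
`s^{ci} t^{ej}` and divide their exponents by `(c, e)`: this is a left inverse of `Ψ`, linear over
`Ψ`, and it kills `Ψ f · y^k` for `0 < k < ec`, since the exponent `(k a'', k b'')` of `y^k` is
not divisible by `(c, e)` by the coprimality of `c, e, a'', b''`. So `π^{n''(ec−1)} f` is a
multiple of `π^{n'} − u^{a'} v^{b'}`, and the powers of `π` cancel because this relation is
`−u^{a'} v^{b'}` modulo `π`.

For the fraction fields, Bézout relations `k c = 1 + m a'`, `k' e = 1 + m' b'` and
`π^{n''} = s^{a''} t^{b''}` put `π^N s` and `π^N t` in the image of `A` for some `N`. With the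
generators above, a power of `π`, which is nonzero in `B`, then multiplies all of `B` into `A`.
-/

/-- The ideal `(π^{m} − u^{a}·v^{b})` of `R[[u,v]] = MvPowerSeries (Fin 2) R`
(with `u = X 0`, `v = X 1`). -/
noncomputable abbrev stmt5.I (R : Type) [CommRing R] (π : R) (m a b : ℕ) :
    Ideal (MvPowerSeries (Fin 2) R) :=
  Ideal.span {(MvPowerSeries.C (σ := Fin 2) (R := R) π) ^ m
    - (MvPowerSeries.X (0 : Fin 2)) ^ a * (MvPowerSeries.X (1 : Fin 2)) ^ b}

/-- The quotient ring `R[[u,v]]/(π^{m} − u^{a}·v^{b})`. -/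
abbrev stmt5.Q (R : Type) [CommRing R] (π : R) (m a b : ℕ) : Type :=
  MvPowerSeries (Fin 2) R ⧸ stmt5.I R π m a b

noncomputable section

namespace stmt5

open MvPowerSeries Finset

lemma le_and_dvd_sub_iff_mod_eq {i k n : ℕ} (hi : i < k) : i ≤ n ∧ k ∣ n - i ↔ n % k = i := by
  constructor
  · rintro ⟨hle, hdvd⟩
    rw [← Nat.modEq_iff_dvd' hle] at hdvd
    rw [← hdvd, Nat.mod_eq_of_lt hi]
  · rintro rfl
    exact ⟨Nat.mod_le _ _, Nat.dvd_sub_mod _⟩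

lemma exists_mul_eq_one_add_mul {c A : ℕ} (hc : 0 < c) (h : c.Coprime A) :
    ∃ k m, k * c = 1 + m * A := by
  obtain ⟨m, -, hm⟩ := Nat.exists_mul_mod_eq_of_coprime (c - 1) h.symm hc.ne'
  rw [Nat.mod_eq_of_lt (show c - 1 < c by omega)] at hm
  refine ⟨A * m / c + 1, m, ?_⟩
  have := Nat.div_add_mod (A * m) c
  rw [hm] at this
  rw [add_mul, one_mul, mul_comm _ c, mul_comm m]
  omega

lemma not_dvd_mul_and_dvd_mul {a b c e k : ℕ} (hce : c.Coprime e) (hca : c.Coprime a)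
    (heb : e.Coprime b) (hk0 : 0 < k) (hk : k < e * c) : ¬ (c ∣ a * k ∧ e ∣ b * k) := by
  rintro ⟨hck, hek⟩
  have := Nat.le_of_dvd hk0
    (hce.symm.mul_dvd_of_dvd_of_dvd (heb.dvd_of_dvd_mul_left hek) (hca.dvd_of_dvd_mul_left hck))
  omega

lemma coprime_gcd_of_gcd_gcd_eq_one {n a b : ℕ} (h : a.gcd (b.gcd n) = 1) :
    (n.gcd b).Coprime (n.gcd a) ∧ (n.gcd b).Coprime a ∧ (n.gcd a).Coprime b := by
  have hca : (n.gcd b).Coprime a := by rw [Nat.gcd_comm]; exact Nat.Coprime.symm h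
  have heb : (n.gcd a).Coprime b := by
    rw [Nat.gcd_comm]; exact Nat.Coprime.symm (by rwa [Nat.gcd_left_comm] at h)
  exact ⟨(heb.coprime_dvd_right (Nat.gcd_dvd_right n b)).symm, hca, heb⟩

lemma pow_mul_eq_of_pow_eq {M : Type*} [CommMonoid M] {p s t : M} {n a b c e k m : ℕ}
    (hrel : p ^ n = s ^ a * t ^ b) (hk : k * c = 1 + m * (a * e)) :
    p ^ (n * (e * m)) * s = (s ^ c) ^ k * (t ^ e) ^ (b * m) := by
  rw [pow_mul, hrel, ← pow_mul, mul_comm c k, hk, mul_pow, ← pow_mul, ← pow_mul, ← pow_mul,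
    pow_add, pow_one]
  ring_nf
  ac_rfl

section Exponents

def pair (i j : ℕ) : Fin 2 →₀ ℕ := Finsupp.single 0 i + Finsupp.single 1 j

variable {i j k l : ℕ}

@[simp] lemma pair_apply_zero : pair i j 0 = i := by simp [pair]

@[simp] lemma pair_apply_one : pair i j 1 = j := by simp [pair]

lemma pair_eq_iff {d : Fin 2 →₀ ℕ} : pair i j = d ↔ i = d 0 ∧ j = d 1 := by
  simp [Finsupp.ext_iff, Fin.forall_fin_two]

@[simp] lemma pair_inj : pair i j = pair k l ↔ i = k ∧ j = l := by simp [pair_eq_iff]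

lemma pair_eta (d : Fin 2 →₀ ℕ) : pair (d 0) (d 1) = d := by simp [pair_eq_iff]

@[simp] lemma pair_le_iff {d : Fin 2 →₀ ℕ} : pair i j ≤ d ↔ i ≤ d 0 ∧ j ≤ d 1 := by
  simp [Finsupp.le_def, Fin.forall_fin_two]

lemma sub_pair (d : Fin 2 →₀ ℕ) : d - pair i j = pair (d 0 - i) (d 1 - j) := by
  simp [Finsupp.ext_iff, Fin.forall_fin_two]

@[simp] lemma pair_eq_zero : pair i j = 0 ↔ i = 0 ∧ j = 0 := by simp [pair_eq_iff]

lemma smul_pair : k • pair i j = pair (i * k) (j * k) := by simp [pair, mul_comm]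

end Exponents

lemma X_pow_mul_X_pow {R : Type*} [CommSemiring R] (i j : ℕ) :
    (X 0 : MvPowerSeries (Fin 2) R) ^ i * X 1 ^ j = monomial (pair i j) 1 := by
  rw [X_pow_eq, X_pow_eq, monomial_mul_monomial, one_mul, pair]

lemma monomial_pair_pow {R : Type*} [CommSemiring R] (i j k : ℕ) :
    (monomial (pair i j) 1 : MvPowerSeries (Fin 2) R) ^ k = monomial (pair (i * k) (j * k)) 1 := by
  rw [monomial_pow, one_pow, smul_pair]

section Descent

variable {σ R : Type*} [CommRing R] [IsDomain R] {π : R}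

lemma C_pow_sub_monomial_dvd_of_dvd_C_pow_mul (hπ : π ≠ 0) {m : ℕ} (hm : 0 < m)
    (μ : σ →₀ ℕ) {M : ℕ} {f : MvPowerSeries σ R}
    (h : C π ^ m - monomial μ 1 ∣ C π ^ M * f) : C π ^ m - monomial μ 1 ∣ f := by
  induction M generalizing f with
  | zero => simpa using h
  | succ M ih =>
    obtain ⟨g, hg⟩ := h
    -- the coefficient of `μ + d` in `hg` shows that `π` divides `g`, so one factor `π` cancels
    have hdvd : ∀ d, π ∣ coeff d g := fun d => by
      have := congrArg (coeff (μ + d)) hg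
      rw [sub_mul, map_sub, ← map_pow, ← map_pow, coeff_C_mul, coeff_C_mul,
        coeff_add_monomial_mul, one_mul] at this
      rw [show coeff d g = π ^ m * coeff (μ + d) g - π ^ (M + 1) * coeff (μ + d) f by
        linear_combination this]
      exact dvd_sub (dvd_mul_of_dvd_left (dvd_pow_self π hm.ne') _)
        (dvd_mul_of_dvd_left (dvd_pow_self π M.succ_ne_zero) _)
    choose q hq using hdvd
    set q' : MvPowerSeries σ R := q
    have hgq : g = C π * q' := by ext d; rw [coeff_C_mul, hq]; rfl
    refine ih ⟨q', mul_left_cancel₀ ((map_ne_zero_iff C C_injective).2 hπ) ?_⟩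
    rw [← mul_assoc, ← pow_succ', hg, hgq]
    ring

lemma not_C_pow_sub_monomial_dvd_C_pow (hπ : π ≠ 0) (hπu : ¬ IsUnit π) {m : ℕ} (hm : 0 < m)
    {μ : σ →₀ ℕ} (hμ : μ ≠ 0) (M : ℕ) : ¬ C π ^ m - monomial μ 1 ∣ C π ^ M := by
  classical
  intro h
  have hu : IsUnit (C π ^ m - monomial μ 1 : MvPowerSeries σ R) :=
    isUnit_of_dvd_one (C_pow_sub_monomial_dvd_of_dvd_C_pow_mul hπ hm μ (by rwa [mul_one]))
  have := hu.map (constantCoeff (σ := σ) (R := R))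
  rw [map_sub, map_pow, constantCoeff_C, ← coeff_zero_eq_constantCoeff_apply, coeff_monomial,
    if_neg hμ.symm, sub_zero, isUnit_pow_iff hm.ne'] at this
  exact hπu this

end Descent

section Expand

variable {R : Type*} [CommRing R] {a b c e : ℕ}

/-- The substitution `X 0 ↦ X 0 ^ c`, `X 1 ↦ X 1 ^ e`, described on coefficients. -/
def expand (c e : ℕ) : MvPowerSeries (Fin 2) R →ₗ[R] MvPowerSeries (Fin 2) R :=
  LinearMap.pi fun d => if c ∣ d 0 ∧ e ∣ d 1 then coeff (pair (d 0 / c) (d 1 / e)) else 0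

lemma coeff_expand (f : MvPowerSeries (Fin 2) R) (d : Fin 2 →₀ ℕ) :
    coeff d (expand c e f) = if c ∣ d 0 ∧ e ∣ d 1 then coeff (pair (d 0 / c) (d 1 / e)) f else 0 := by
  change (if c ∣ d 0 ∧ e ∣ d 1 then coeff (pair (d 0 / c) (d 1 / e)) else 0 :
    MvPowerSeries (Fin 2) R →ₗ[R] R) f = _
  split_ifs <;> rfl

def extract (c e i j : ℕ) : MvPowerSeries (Fin 2) R →ₗ[R] MvPowerSeries (Fin 2) R :=
  LinearMap.pi fun d => coeff (pair (c * d 0 + i) (e * d 1 + j))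

lemma coeff_extract (i j : ℕ) (g : MvPowerSeries (Fin 2) R) (d : Fin 2 →₀ ℕ) :
    coeff d (extract c e i j g) = coeff (pair (c * d 0 + i) (e * d 1 + j)) g :=
  rfl

lemma extract_expand_mul_monomial {i j : ℕ} (hij : ¬ (c ∣ i ∧ e ∣ j)) (f : MvPowerSeries (Fin 2) R) :
    extract c e 0 0 (expand c e f * monomial (pair i j) 1) = 0 := by
  ext d
  rw [coeff_extract, coeff_mul_monomial, LinearMap.map_zero]
  split_ifs with hle
  · rw [sub_pair, coeff_expand, if_neg, zero_mul]
    simp only [pair_le_iff, pair_apply_zero, pair_apply_one, add_zero] at hle ⊢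
    rintro ⟨hi, hj⟩
    exact hij ⟨(Nat.dvd_sub_iff_right hle.1 (dvd_mul_right _ _)).1 hi,
      (Nat.dvd_sub_iff_right hle.2 (dvd_mul_right _ _)).1 hj⟩
  · rfl

variable (hc : 0 < c) (he : 0 < e)
include hc he

lemma expand_monomial (i j : ℕ) (r : R) :
    expand c e (monomial (pair i j) r) = monomial (pair (c * i) (e * j)) r := by
  ext d
  obtain ⟨k, l, rfl⟩ : ∃ k l, d = pair k l := ⟨_, _, (pair_eta d).symm⟩
  simp only [coeff_expand, coeff_monomial, pair_apply_zero, pair_apply_one, pair_inj]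
  by_cases h : c ∣ k ∧ e ∣ l
  · obtain ⟨⟨k, rfl⟩, ⟨l, rfl⟩⟩ := h
    simp [hc.ne', he.ne', eq_comm]
  · rw [if_neg h, if_neg]
    rintro ⟨rfl, rfl⟩
    exact h ⟨dvd_mul_right _ _, dvd_mul_right _ _⟩

lemma expand_C (r : R) : expand c e (C r) = C r := by
  have h := expand_monomial hc he 0 0 r
  rwa [mul_zero, mul_zero, pair_eq_zero.2 ⟨rfl, rfl⟩, monomial_zero_eq_C_apply] at h

lemma expand_X_pow_mul_X_pow (i j : ℕ) :
    expand c e (X 0 ^ i * X 1 ^ j : MvPowerSeries (Fin 2) R) = X 0 ^ (c * i) * X 1 ^ (e * j) := by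
  rw [X_pow_mul_X_pow, X_pow_mul_X_pow, expand_monomial hc he]

lemma expand_C_pow_sub_monomial (r : R) :
    expand c e (C r ^ (e * c) - monomial (pair (a * e) (b * c)) 1) =
      C r ^ (e * c) - monomial (pair a b) 1 ^ (e * c) := by
  rw [map_sub, ← map_pow, expand_C hc he, expand_monomial hc he, monomial_pair_pow, map_pow,
    show pair (c * (a * e)) (e * (b * c)) = pair (a * (e * c)) (b * (e * c)) from
      pair_inj.2 ⟨by ring, by ring⟩]

lemma extract_expand (f : MvPowerSeries (Fin 2) R) : extract c e 0 0 (expand c e f) = f := by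
  ext d
  simp [coeff_extract, coeff_expand, hc.ne', he.ne', pair_eta]

lemma extract_monomial_mul (i j : ℕ) (g : MvPowerSeries (Fin 2) R) :
    extract c e 0 0 (monomial (pair (c * i) (e * j)) 1 * g) =
      monomial (pair i j) 1 * extract c e 0 0 g := by
  ext d
  simp only [coeff_extract, coeff_monomial_mul, pair_le_iff, pair_apply_zero, pair_apply_one,
    add_zero, Nat.mul_le_mul_left_iff hc, Nat.mul_le_mul_left_iff he, sub_pair, ← Nat.mul_sub]

lemma extract_sub_pow_mul (r : R) (g : MvPowerSeries (Fin 2) R) :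
    extract c e 0 0 ((C r ^ (e * c) - monomial (pair a b) 1 ^ (e * c)) * g) =
      (C r ^ (e * c) - monomial (pair (a * e) (b * c)) 1) * extract c e 0 0 g := by
  rw [sub_mul, map_sub, monomial_pair_pow,
    show pair (a * (e * c)) (b * (e * c)) = pair (c * (a * e)) (e * (b * c)) from
      pair_inj.2 ⟨by ring, by ring⟩,
    extract_monomial_mul hc he, ← map_pow, ← smul_eq_C_mul, map_smul, smul_eq_C_mul, sub_mul]

lemma extract_expand_mul_geom_sum (hce : c.Coprime e) (hca : c.Coprime a) (heb : e.Coprime b)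
    (r : R) (f : MvPowerSeries (Fin 2) R) :
    extract c e 0 0 (expand c e f *
        ∑ i ∈ range (e * c), C r ^ i * monomial (pair a b) 1 ^ (e * c - 1 - i)) =
      C r ^ (e * c - 1) * f := by
  have hec : 0 < e * c := Nat.mul_pos he hc
  rw [mul_sum, map_sum, sum_eq_single_of_mem (e * c - 1) (mem_range.2 (by omega))]
  · rw [Nat.sub_self, pow_zero, mul_one, mul_comm, ← map_pow, ← smul_eq_C_mul, map_smul,
      extract_expand hc he, smul_eq_C_mul]
  · intro i hi hne
    rw [mem_range] at hi
    rw [monomial_pair_pow, mul_left_comm, ← map_pow, ← smul_eq_C_mul, map_smul,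
      extract_expand_mul_monomial (not_dvd_mul_and_dvd_mul hce hca heb (by omega) (by omega)),
      smul_zero]

lemma sum_monomial_mul_expand_extract (g : MvPowerSeries (Fin 2) R) :
    ∑ ij ∈ range c ×ˢ range e,
      monomial (pair ij.1 ij.2) 1 * expand c e (extract c e ij.1 ij.2 g) = g := by
  ext d
  rw [map_sum, Finset.sum_eq_single (d 0 % c, d 1 % e)]
  · rw [coeff_monomial_mul, if_pos (pair_le_iff.2 ⟨Nat.mod_le _ _, Nat.mod_le _ _⟩), one_mul,
      sub_pair, coeff_expand]
    simp [Nat.dvd_sub_mod, Nat.mul_div_cancel', coeff_extract, Nat.sub_add_cancel (Nat.mod_le _ _),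
      pair_eta]
  · rintro ⟨i, j⟩ hij hne
    simp only [mem_product, mem_range] at hij
    rw [coeff_monomial_mul, sub_pair, coeff_expand]
    simp only [pair_le_iff, pair_apply_zero, pair_apply_one]
    split_ifs with hle hdvd
    · exact absurd (Prod.ext ((le_and_dvd_sub_iff_mod_eq hij.1).1 ⟨hle.1, hdvd.1⟩).symm
        ((le_and_dvd_sub_iff_mod_eq hij.2).1 ⟨hle.2, hdvd.2⟩).symm) hne
    · rw [mul_zero]
    · rfl
  · intro h
    exact absurd (mem_product.2 ⟨mem_range.2 (Nat.mod_lt _ hc), mem_range.2 (Nat.mod_lt _ he)⟩) h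

end Expand

section Quotient

variable {R : Type} [CommRing R] {π : R} {n a b c e : ℕ}

lemma mem_I_iff {m : ℕ} {f : MvPowerSeries (Fin 2) R} :
    f ∈ I R π m a b ↔ C π ^ m - monomial (pair a b) 1 ∣ f := by
  rw [I, Ideal.mem_span_singleton, X_pow_mul_X_pow]

lemma mk_C_pow_eq :
    Ideal.Quotient.mk (I R π n a b) (C π) ^ n =
      Ideal.Quotient.mk (I R π n a b) (X 0) ^ a * Ideal.Quotient.mk (I R π n a b) (X 1) ^ b := by
  simpa only [map_pow, map_mul] using Ideal.Quotient.eq.2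
    (Ideal.subset_span (Set.mem_singleton _) : C π ^ n - X 0 ^ a * X 1 ^ b ∈ I R π n a b)

lemma mk_C_pow_ne_zero [IsDomain R] (hπ0 : π ≠ 0) (hπu : ¬ IsUnit π) (hn : 0 < n) (ha : 0 < a)
    (M : ℕ) : Ideal.Quotient.mk (I R π n a b) (C π ^ M) ≠ 0 := by
  rw [Ne, Ideal.Quotient.eq_zero_iff_mem, mem_I_iff]
  exact not_C_pow_sub_monomial_dvd_C_pow hπ0 hπu hn (by simp [ha.ne']) M

lemma comap_I_eq [IsDomain R] (hπ : π ≠ 0) (hn : 0 < n) (hc : 0 < c) (he : 0 < e)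
    (hce : c.Coprime e) (hca : c.Coprime a) (heb : e.Coprime b)
    (Ψ : MvPowerSeries (Fin 2) R →ₐ[R] MvPowerSeries (Fin 2) R) (hΨ : ∀ f, Ψ f = expand c e f) :
    (I R π n a b).comap (Ψ : MvPowerSeries (Fin 2) R →+* MvPowerSeries (Fin 2) R) =
      I R π (n * (e * c)) (a * e) (b * c) := by
  have hP : (C π ^ (n * (e * c)) : MvPowerSeries (Fin 2) R) = C (π ^ n) ^ (e * c) := by rw [map_pow, pow_mul]
  ext f
  rw [Ideal.mem_comap, AlgHom.coe_toRingHom, hΨ, mem_I_iff, mem_I_iff]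
  constructor
  · rintro ⟨g, hg⟩
    refine C_pow_sub_monomial_dvd_of_dvd_C_pow_mul hπ (by positivity) _
      (M := n * (e * c - 1)) ⟨extract c e 0 0 g, ?_⟩
    calc C π ^ (n * (e * c - 1)) * f
        = extract c e 0 0 (expand c e f *
            ∑ i ∈ range (e * c), C (π ^ n) ^ i * monomial (pair a b) 1 ^ (e * c - 1 - i)) := by
          rw [extract_expand_mul_geom_sum hc he hce hca heb, pow_mul, map_pow]
      _ = extract c e 0 0 ((C (π ^ n) ^ (e * c) - monomial (pair a b) 1 ^ (e * c)) * g) := by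
          rw [hg, map_pow, ← geom_sum₂_mul]
          ring_nf
      _ = _ := by rw [extract_sub_pow_mul hc he, hP]
  · rintro ⟨g, rfl⟩
    rw [← hΨ, map_mul, hΨ, hP, expand_C_pow_sub_monomial hc he, map_pow]
    exact (sub_dvd_pow_sub_pow _ _ _).mul_right _

variable {φ : Q R π (n * (e * c)) (a * e) (b * c) →+* Q R π n a b}
  (hφ : ∀ f, φ (Ideal.Quotient.mk _ f) = Ideal.Quotient.mk _ (expand c e f))
include hφ

lemma mk_eq_sum (hc : 0 < c) (he : 0 < e) (g : MvPowerSeries (Fin 2) R) :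
    Ideal.Quotient.mk (I R π n a b) g =
      ∑ ij ∈ range c ×ˢ range e, Ideal.Quotient.mk (I R π n a b) (X 0) ^ ij.1 *
        Ideal.Quotient.mk (I R π n a b) (X 1) ^ ij.2 *
          φ (Ideal.Quotient.mk _ (extract c e ij.1 ij.2 g)) := by
  conv_lhs => rw [← sum_monomial_mul_expand_extract hc he g]
  simp only [map_sum, map_mul, hφ, ← X_pow_mul_X_pow, map_pow]

lemma span_X_pow_mul_X_pow_eq_top (hc : 0 < c) (he : 0 < e) :
    letI : Algebra (Q R π (n * (e * c)) (a * e) (b * c)) (Q R π n a b) := φ.toAlgebra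
    Submodule.span (Q R π (n * (e * c)) (a * e) (b * c))
      {x : Q R π n a b | ∃ i j : ℕ, i < c ∧ j < e ∧
        x = Ideal.Quotient.mk (I R π n a b) (X 0) ^ i * Ideal.Quotient.mk (I R π n a b) (X 1) ^ j}
      = ⊤ := by
  let _ : Algebra (Q R π (n * (e * c)) (a * e) (b * c)) (Q R π n a b) := φ.toAlgebra
  rw [Submodule.eq_top_iff']
  intro z
  obtain ⟨g, rfl⟩ := Ideal.Quotient.mk_surjective z
  rw [mk_eq_sum hφ hc he g]
  apply Submodule.sum_mem
  intro ij hij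
  rw [mem_product, mem_range, mem_range] at hij
  rw [mul_comm (_ * _ : Q R π n a b)]
  exact Submodule.smul_mem _ _ (Submodule.subset_span ⟨ij.1, ij.2, hij.1, hij.2, rfl⟩)

lemma exists_C_pow_mul_mem_range (hc : 0 < c) (he : 0 < e) (hce : c.Coprime e)
    (hca : c.Coprime a) (heb : e.Coprime b) (y : Q R π n a b) :
    ∃ M, Ideal.Quotient.mk (I R π n a b) (C π) ^ M * y ∈ φ.range := by
  set p := Ideal.Quotient.mk (I R π n a b) (C π)
  set s := Ideal.Quotient.mk (I R π n a b) (X 0)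
  set t := Ideal.Quotient.mk (I R π n a b) (X 1)
  have hrel : p ^ n = s ^ a * t ^ b := mk_C_pow_eq
  have hp : p ∈ φ.range := ⟨Ideal.Quotient.mk _ (C π), by rw [hφ, expand_C hc he]⟩
  have hs : s ^ c ∈ φ.range := ⟨Ideal.Quotient.mk _ (X 0 ^ 1 * X 1 ^ 0), by
    rw [hφ, expand_X_pow_mul_X_pow hc he, mul_zero, pow_zero, mul_one, mul_one, map_pow]⟩
  have ht : t ^ e ∈ φ.range := ⟨Ideal.Quotient.mk _ (X 0 ^ 0 * X 1 ^ 1), by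
    rw [hφ, expand_X_pow_mul_X_pow hc he, mul_zero, pow_zero, one_mul, mul_one, map_pow]⟩
  obtain ⟨k₁, m₁, hk₁⟩ := exists_mul_eq_one_add_mul hc (hca.mul_right hce)
  obtain ⟨k₂, m₂, hk₂⟩ := exists_mul_eq_one_add_mul he (heb.mul_right hce.symm)
  have hs' : p ^ (n * (e * m₁)) * s ∈ φ.range := by
    rw [pow_mul_eq_of_pow_eq hrel hk₁]
    exact mul_mem (pow_mem hs _) (pow_mem ht _)
  have ht' : p ^ (n * (c * m₂)) * t ∈ φ.range := by
    rw [pow_mul_eq_of_pow_eq (hrel.trans (mul_comm _ _)) hk₂]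
    exact mul_mem (pow_mem ht _) (pow_mem hs _)
  set K := n * (e * m₁) + n * (c * m₂)
  have hsK : p ^ K * s ∈ φ.range := by
    rw [pow_add, mul_right_comm]; exact mul_mem hs' (pow_mem hp _)
  have htK : p ^ K * t ∈ φ.range := by
    rw [pow_add, mul_assoc]; exact mul_mem (pow_mem hp _) ht'
  obtain ⟨g, rfl⟩ := Ideal.Quotient.mk_surjective y
  refine ⟨K * (c + e), ?_⟩
  rw [mk_eq_sum hφ hc he g, mul_sum]
  refine sum_mem fun ij hij => ?_
  rw [mem_product, mem_range, mem_range] at hij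
  obtain ⟨r, hr⟩ := Nat.exists_eq_add_of_le
    (show K * ij.1 + K * ij.2 ≤ K * (c + e) by
      rw [← mul_add]; exact Nat.mul_le_mul_left _ (by omega))
  rw [hr, show p ^ (K * ij.1 + K * ij.2 + r) * (s ^ ij.1 * t ^ ij.2 * φ _) =
      p ^ r * (p ^ K * s) ^ ij.1 * (p ^ K * t) ^ ij.2 * φ _ by ring]
  exact mul_mem (mul_mem (mul_mem (pow_mem hp _) (pow_mem hsK _)) (pow_mem htK _)) ⟨_, rfl⟩

lemma exists_map_ne_zero_mul_eq_map [IsDomain R] (hπ0 : π ≠ 0) (hπu : ¬ IsUnit π) (hn : 0 < n)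
    (ha : 0 < a) (hc : 0 < c) (he : 0 < e) (hce : c.Coprime e) (hca : c.Coprime a)
    (heb : e.Coprime b) (y : Q R π n a b) : ∃ a₁ a₂, φ a₂ ≠ 0 ∧ φ a₂ * y = φ a₁ := by
  obtain ⟨M, a₁, ha₁⟩ := exists_C_pow_mul_mem_range hφ hc he hce hca heb y
  have hπM : φ (Ideal.Quotient.mk _ (C π ^ M)) = Ideal.Quotient.mk (I R π n a b) (C π) ^ M := by
    rw [hφ, ← map_pow, expand_C hc he, map_pow, map_pow]
  refine ⟨a₁, _, ?_, by rw [hπM, ha₁]⟩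
  rw [hπM, ← map_pow]
  exact mk_C_pow_ne_zero hπ0 hπu hn ha M

end Quotient

end stmt5

end

theorem stmt_5_general
    (R : Type) [CommRing R] [IsDomain R]
    (π : R) (hπ : Irreducible π)
    (n' a' b' : ℕ) (hn' : 0 < n') (ha' : 0 < a')
    (hgcd : Nat.gcd a' (Nat.gcd b' n') = 1)
    (e c n'' a'' b'' : ℕ)
    (he : e = Nat.gcd n' a') (hc : c = Nat.gcd n' b')
    (hn'' : n'' = n' / (e * c)) (ha'' : a'' = a' / e) (hb'' : b'' = b' / c)
    (Ψ : MvPowerSeries (Fin 2) R →ₐ[R] MvPowerSeries (Fin 2) R)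
    (hΨ : ∀ (f : MvPowerSeries (Fin 2) R) (d : Fin 2 →₀ ℕ),
      MvPowerSeries.coeff (R := R) d (Ψ f) =
        if c ∣ d 0 ∧ e ∣ d 1 then
          MvPowerSeries.coeff (R := R)
            (Finsupp.single 0 (d 0 / c) + Finsupp.single 1 (d 1 / e)) f
        else 0) :
    ∃ φ : stmt5.Q R π n' a' b' →+* stmt5.Q R π n'' a'' b'',
      (∀ f : MvPowerSeries (Fin 2) R,
        φ (Ideal.Quotient.mk (stmt5.I R π n' a' b') f)
          = Ideal.Quotient.mk (stmt5.I R π n'' a'' b'') (Ψ f)) ∧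
      Function.Injective φ ∧
      (letI : Algebra (stmt5.Q R π n' a' b') (stmt5.Q R π n'' a'' b'') := φ.toAlgebra
       Submodule.span (stmt5.Q R π n' a' b')
         {x : stmt5.Q R π n'' a'' b'' | ∃ i j : ℕ, i < c ∧ j < e ∧
           x = (Ideal.Quotient.mk (stmt5.I R π n'' a'' b'') (MvPowerSeries.X (0 : Fin 2))) ^ i
             * (Ideal.Quotient.mk (stmt5.I R π n'' a'' b'') (MvPowerSeries.X (1 : Fin 2))) ^ j}
         = ⊤) ∧
      (∀ y, ∃ a₁ a₂, φ a₂ ≠ 0 ∧ φ a₂ * y = φ a₁) := by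
  open stmt5 in
  have hc0 : 0 < c := hc ▸ Nat.gcd_pos_of_pos_left b' hn'
  have he0 : 0 < e := he ▸ Nat.gcd_pos_of_pos_left a' hn'
  obtain ⟨hce, hca, heb⟩ : c.Coprime e ∧ c.Coprime a' ∧ e.Coprime b' :=
    he ▸ hc ▸ coprime_gcd_of_gcd_gcd_eq_one hgcd
  obtain rfl : n' = n'' * (e * c) := by
    rw [hn'', Nat.div_mul_cancel (hce.symm.mul_dvd_of_dvd_of_dvd
      (he ▸ Nat.gcd_dvd_left n' a') (hc ▸ Nat.gcd_dvd_left n' b'))]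
  obtain rfl : a' = a'' * e := by rw [ha'', Nat.div_mul_cancel (he ▸ Nat.gcd_dvd_right _ a')]
  obtain rfl : b' = b'' * c := by rw [hb'', Nat.div_mul_cancel (hc ▸ Nat.gcd_dvd_right _ b')]
  replace hca := hca.coprime_dvd_right (dvd_mul_right a'' e)
  replace heb := heb.coprime_dvd_right (dvd_mul_right b'' c)
  have hΨ' (f) : Ψ f = expand c e f :=
    MvPowerSeries.ext fun d => (hΨ f d).trans (coeff_expand f d).symm
  have hcomap := comap_I_eq hπ.ne_zero (Nat.pos_of_mul_pos_right hn') hc0 he0 hce hca heb Ψ hΨ'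
  have hφ (f : MvPowerSeries (Fin 2) R) :
      Ideal.quotientMap _ (Ψ : MvPowerSeries (Fin 2) R →+* _) hcomap.ge (Ideal.Quotient.mk _ f) =
        Ideal.Quotient.mk _ (expand c e f) := congrArg _ (hΨ' f)
  exact ⟨_, fun f => rfl, Ideal.quotientMap_injective' hcomap.le,
    span_X_pow_mul_X_pow_eq_top hφ hc0 he0,
    exists_map_ne_zero_mul_eq_map hφ hπ.ne_zero hπ.not_isUnit (Nat.pos_of_mul_pos_right hn')
      (Nat.pos_of_mul_pos_right ha') hc0 he0 hce hca heb⟩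

/-- Let `R` be a complete discrete valuation ring with uniformizer `π`
whose residue field is algebraically closed of characteristic `p ≥ 0`.  Let `n', a', b'`
be positive integers with `n'` not divisible by `p` and `gcd(a', b', n') = 1`.  Set
`e = gcd(n', a')`, `c = gcd(n', b')`, `n'' = n'/(e·c)`, `a'' = a'/e`, `b'' = b'/c`.
Let `Ψ : R[[u,v]] → R[[s,t]]` be the `R`-algebra homomorphism determined by `u ↦ s^c`
and `v ↦ t^e` (characterized on coefficients: the coefficient of `s^i t^j` in `Ψ f` is
the coefficient of `u^{i/c} v^{j/e}` in `f` if `c ∣ i` and `e ∣ j`, and `0` otherwise).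
Then `Ψ` induces an injective ring homomorphism from
`A = R[[u,v]]/(π^{n'} − u^{a'}·v^{b'})` to `B = R[[s,t]]/(π^{n''} − s^{a''}·t^{b''})`,
`B` is a finite `A`-module generated by the monomials `s^i t^j` with `0 ≤ i < c` and
`0 ≤ j < e`, and the induced map of fraction fields `Frac(A) → Frac(B)` is an
isomorphism (expressed by: the induced map is injective and every element of `B` is a
quotient of elements of its image). -/
theorem stmt_5
    (R : Type) [CommRing R] [IsDomain R] [IsDiscreteValuationRing R]
    [IsAdicComplete (IsLocalRing.maximalIdeal R) R]
    [IsAlgClosed (IsLocalRing.ResidueField R)]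
    (p : ℕ) (hp : p = 0 ∨ p.Prime) [CharP (IsLocalRing.ResidueField R) p]
    (π : R) (hπ : Irreducible π)
    (n' a' b' : ℕ) (hn' : 0 < n') (ha' : 0 < a') (hb' : 0 < b')
    (hpn : ¬ p ∣ n') (hgcd : Nat.gcd a' (Nat.gcd b' n') = 1)
    (e c n'' a'' b'' : ℕ)
    (he : e = Nat.gcd n' a') (hc : c = Nat.gcd n' b')
    (hn'' : n'' = n' / (e * c)) (ha'' : a'' = a' / e) (hb'' : b'' = b' / c)
    (Ψ : MvPowerSeries (Fin 2) R →ₐ[R] MvPowerSeries (Fin 2) R)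
    (hΨ : ∀ (f : MvPowerSeries (Fin 2) R) (d : Fin 2 →₀ ℕ),
      MvPowerSeries.coeff (R := R) d (Ψ f) =
        if c ∣ d 0 ∧ e ∣ d 1 then
          MvPowerSeries.coeff (R := R)
            (Finsupp.single 0 (d 0 / c) + Finsupp.single 1 (d 1 / e)) f
        else 0) :
    ∃ φ : stmt5.Q R π n' a' b' →+* stmt5.Q R π n'' a'' b'',
      (∀ f : MvPowerSeries (Fin 2) R,
        φ (Ideal.Quotient.mk (stmt5.I R π n' a' b') f)
          = Ideal.Quotient.mk (stmt5.I R π n'' a'' b'') (Ψ f)) ∧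
      Function.Injective φ ∧
      (letI : Algebra (stmt5.Q R π n' a' b') (stmt5.Q R π n'' a'' b'') := φ.toAlgebra
       Submodule.span (stmt5.Q R π n' a' b')
         {x : stmt5.Q R π n'' a'' b'' | ∃ i j : ℕ, i < c ∧ j < e ∧
           x = (Ideal.Quotient.mk (stmt5.I R π n'' a'' b'') (MvPowerSeries.X (0 : Fin 2))) ^ i
             * (Ideal.Quotient.mk (stmt5.I R π n'' a'' b'') (MvPowerSeries.X (1 : Fin 2))) ^ j}
         = ⊤) ∧
      (∀ y, ∃ a₁ a₂, φ a₂ ≠ 0 ∧ φ a₂ * y = φ a₁) :=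
  stmt_5_general R π hπ n' a' b' hn' ha' hgcd e c n'' a'' b'' he hc hn'' ha'' hb'' Ψ hΨ
end

section
/- Let l ≥ 1 and let m₀, m₁, …, m_{l+1} be positive integers with m₀ = m_{l+1} = 1, such that for each i with 1 ≤ i ≤ l there exists an integer e_i with m_{i−1} + m_i·e_i + m_{i+1} = 0. Suppose i with 1 ≤ i ≤ l is such that m_i ≥ m_j for all 1 ≤ j ≤ l and m_i > 1. Then m_{i−1} < m_i, m_{i+1} < m_i, and e_i = −1. -/
/-!
Write `M = m i`. If `a + M e + M = 0` with `0 < a ≤ M`, then `M (-e - 1) = a ∈ (0, M]` forces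
`a = M`. Hence two adjacent maxima `m j = m (j + 1) = M` force `m (j - 1) = M`, and descending
along the chain gives `m 0 = M > 1`, which is absurd. So both neighbours of `m i` are strictly
smaller, and then `M (-e) = m (i - 1) + m (i + 1) ∈ (0, 2M)` gives `e = -1`.
-/

theorem eq_of_add_mul_add_eq_zero {a M e : ℤ} (ha : 0 < a) (haM : a ≤ M)
    (h : a + M * e + M = 0) : a = M := by
  have hM : 0 < M := ha.trans_le haM
  have hprod : M * (-e - 1) = a := by linear_combination -h
  have hlo : 1 ≤ -e - 1 := by
    by_contra! hlt
    nlinarith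
  have hhi : -e - 1 ≤ 1 := by
    by_contra! hgt
    nlinarith
  rw [← hprod, le_antisymm hhi hlo, mul_one]

theorem eq_neg_one_of_add_mul_add_eq_zero {a b M e : ℤ} (ha : 0 < a) (haM : a < M)
    (hb : 0 < b) (hbM : b < M) (h : a + M * e + b = 0) : e = -1 := by
  have hprod : M * (-e) = a + b := by linear_combination -h
  have hlo : 1 ≤ -e := by
    by_contra! hlt
    nlinarith
  have hhi : -e ≤ 1 := by
    by_contra! hgt
    nlinarith
  omega

theorem apply_zero_eq_of_adjacent_eq (m : ℕ → ℕ) (M n : ℕ)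
    (hpos : ∀ j ≤ n, 0 < m j) (hle : ∀ j ≤ n, m j ≤ M)
    (hrel : ∀ j, 1 ≤ j → j ≤ n → ∃ e : ℤ,
      (m (j - 1) : ℤ) + (m j : ℤ) * e + (m (j + 1) : ℤ) = 0) :
    ∀ j ≤ n, m j = M → m (j + 1) = M → m 0 = M := by
  intro j
  induction j with
  | zero => exact fun _ h _ => h
  | succ j ih =>
    intro hjn hj hj1
    obtain ⟨e, he⟩ := hrel (j + 1) (by omega) hjn
    rw [Nat.add_sub_cancel, hj, hj1] at he
    have hprev : (m j : ℤ) = M :=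
      eq_of_add_mul_add_eq_zero (by exact_mod_cast hpos j (by omega))
        (by exact_mod_cast hle j (by omega)) he
    exact ih (by omega) (by exact_mod_cast hprev) hj

theorem stmt_14_general
    (l : ℕ) (m : ℕ → ℕ)
    (hpos : ∀ j ≤ l + 1, 0 < m j)
    (hm0 : m 0 = 1) (hml : m (l + 1) = 1)
    (hrel : ∀ j, 1 ≤ j → j ≤ l → ∃ e : ℤ,
      (m (j - 1) : ℤ) + (m j : ℤ) * e + (m (j + 1) : ℤ) = 0)
    (i : ℕ) (hi1 : 1 ≤ i) (hil : i ≤ l)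
    (hmax : ∀ j, 1 ≤ j → j ≤ l → m j ≤ m i) (hbig : 1 < m i)
    (e : ℤ) (he : (m (i - 1) : ℤ) + (m i : ℤ) * e + (m (i + 1) : ℤ) = 0) :
    m (i - 1) < m i ∧ m (i + 1) < m i ∧ e = -1 := by
  have hle : ∀ j ≤ l, m j ≤ m i := by
    rintro (_ | j) hj
    · omega
    · exact hmax (j + 1) (by omega) hj
  have no_adjacent : ∀ j ≤ l, m j = m i → m (j + 1) ≠ m i := fun j hj hmj hmj1 => by
    have h0 := apply_zero_eq_of_adjacent_eq m (m i) l (fun k hk => hpos k (by omega)) hle hrel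
      j hj hmj hmj1
    omega
  have hprev : m (i - 1) < m i := by
    refine (hle (i - 1) (by omega)).lt_of_ne fun h => no_adjacent (i - 1) (by omega) h ?_
    rw [Nat.sub_add_cancel hi1]
  have hnext : m (i + 1) < m i := by
    rcases hil.eq_or_lt with rfl | hlt
    · rwa [hml]
    · exact (hmax (i + 1) (by omega) hlt).lt_of_ne (no_adjacent i hil rfl)
  refine ⟨hprev, hnext, eq_neg_one_of_add_mul_add_eq_zero ?_ (by exact_mod_cast hprev) ?_
    (by exact_mod_cast hnext) he⟩
  · exact_mod_cast hpos (i - 1) (by omega)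
  · exact_mod_cast hpos (i + 1) (by omega)

/-- Let `l ≥ 1` and let `m₀, m₁, …, m_{l+1}` be positive integers with
`m₀ = m_{l+1} = 1`, such that for each `i` with `1 ≤ i ≤ l` there exists an integer `e_i`
with `m_{i−1} + m_i·e_i + m_{i+1} = 0`.  Suppose `i` with `1 ≤ i ≤ l` is such that
`m_i ≥ m_j` for all `1 ≤ j ≤ l` and `m_i > 1`.  Then `m_{i−1} < m_i`, `m_{i+1} < m_i`,
and `e_i = −1`. -/
theorem stmt_14
    (l : ℕ) (hl : 1 ≤ l) (m : ℕ → ℕ)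
    (hpos : ∀ j ≤ l + 1, 0 < m j)
    (hm0 : m 0 = 1) (hml : m (l + 1) = 1)
    (hrel : ∀ j, 1 ≤ j → j ≤ l → ∃ e : ℤ,
      (m (j - 1) : ℤ) + (m j : ℤ) * e + (m (j + 1) : ℤ) = 0)
    (i : ℕ) (hi1 : 1 ≤ i) (hil : i ≤ l)
    (hmax : ∀ j, 1 ≤ j → j ≤ l → m j ≤ m i) (hbig : 1 < m i)
    (e : ℤ) (he : (m (i - 1) : ℤ) + (m i : ℤ) * e + (m (i + 1) : ℤ) = 0) :
    m (i - 1) < m i ∧ m (i + 1) < m i ∧ e = -1 :=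
  stmt_14_general l m hpos hm0 hml hrel i hi1 hil hmax hbig e he
end
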